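/- Let ρ and σ be density matrices on ℂ^n with σ positive definite. Then lim_{α→∞} H_α(ρ‖σ) = D_max(ρ‖σ), where D_max(ρ‖σ) := log₂ inf{ λ ∈ ℝ : λσ − ρ is positive semidefinite } is the max-relative entropy. -/

import Mathlib

/-!
Let `M` be the maximum of the quotient `⟨x, ρ x⟩ / ⟨x, σ x⟩` of quadratic forms, attained at a
unit vector `v` by compactness of the sphere (this is where `σ > 0` enters). Then `λσ - ρ ≥ 0`
iff `λ ≥ M`, so `D_max(ρ‖σ) = log₂ M`. For every admissible `E ≥ α⁻¹𝟙` both `E` and `E - α⁻¹𝟙`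
are positive, so `Tr[Eσ] ≥ α⁻¹ > 0` and `Tr[E(Mσ - ρ)] ≥ 0`, whence `sup_α(ρ/σ) ≤ M`; the test
operator `E = α⁻¹𝟙 + (1 - α⁻¹)|v⟩⟨v|` has ratio
`(α⁻¹ + (1 - α⁻¹)⟨v, ρ v⟩) / (α⁻¹ + (1 - α⁻¹)⟨v, σ v⟩) → M`. As `α / (α - 1) → 1`, `H_α(ρ‖σ)` is
squeezed between two quantities tending to `log₂ M`.
-/

open scoped ComplexOrder

/-- `sup_α(ρ/σ) = sup { Tr[Eρ]/Tr[Eσ] : α⁻¹·𝟙 ≤ E ≤ 𝟙 }`. -/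
noncomputable def supAlpha {n : ℕ} (α : ℝ) (ρ σ : Matrix (Fin n) (Fin n) ℂ) : ℝ :=
  sSup { x : ℝ | ∃ E : Matrix (Fin n) (Fin n) ℂ,
    (E - ((α⁻¹ : ℝ) : ℂ) • (1 : Matrix (Fin n) (Fin n) ℂ)).PosSemidef ∧
    ((1 : Matrix (Fin n) (Fin n) ℂ) - E).PosSemidef ∧
    x = ((E * ρ).trace.re) / ((E * σ).trace.re) }

/-- The Hilbert α-divergence `H_α(ρ‖σ) = (α/(α-1))·log₂ sup_α(ρ/σ)`. -/
noncomputable def HAlpha {n : ℕ} (α : ℝ) (ρ σ : Matrix (Fin n) (Fin n) ℂ) : ℝ :=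
  (α / (α - 1)) * Real.logb 2 (supAlpha α ρ σ)

/-- The max-relative entropy `D_max(ρ‖σ) = log₂ inf { λ ∈ ℝ : λσ - ρ ≥ 0 }`. -/
noncomputable def Dmax {n : ℕ} (ρ σ : Matrix (Fin n) (Fin n) ℂ) : ℝ :=
  Real.logb 2 (sInf { lam : ℝ | ((lam : ℂ) • σ - ρ).PosSemidef })

open Matrix Filter Topology

namespace Matrix

variable {ι 𝕜 : Type*} [Fintype ι] [RCLike 𝕜]

theorem trace_vecMulVec_mul {R : Type*} [CommSemiring R] (u w : ι → R) (A : Matrix ι ι R) :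
    (vecMulVec u w * A).trace = w ⬝ᵥ A *ᵥ u := by
  rw [vecMulVec_mul, trace_vecMulVec, dotProduct_comm, dotProduct_mulVec]

theorem PosSemidef.trace_mul_nonneg {A B : Matrix ι ι 𝕜} (hA : A.PosSemidef)
    (hB : B.PosSemidef) : 0 ≤ (A * B).trace := by
  obtain ⟨m, v, rfl⟩ := posSemidef_iff_eq_sum_vecMulVec.mp hA
  rw [Finset.sum_mul, trace_sum]
  exact Finset.sum_nonneg fun i _ ↦ by
    rw [trace_vecMulVec_mul]; exact hB.dotProduct_mulVec_nonneg _

theorem posSemidef_one_sub_vecMulVec_self_star [DecidableEq ι] {v : ι → 𝕜}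
    (hv : star v ⬝ᵥ v = 1) : (1 - vecMulVec v (star v)).PosSemidef := by
  have hP := (posSemidef_vecMulVec_self_star v).isHermitian
  have hidem : vecMulVec v (star v) * vecMulVec v (star v) = vecMulVec v (star v) := by
    rw [vecMulVec_mul_vecMulVec, hv, one_smul]
  have hQ : (1 - vecMulVec v (star v))ᴴ * (1 - vecMulVec v (star v))
      = 1 - vecMulVec v (star v) := by
    rw [conjTranspose_sub, conjTranspose_one, hP.eq, sub_mul, mul_sub, mul_sub, hidem]
    simp
  exact hQ ▸ posSemidef_conjTranspose_mul_self _

noncomputable def quadForm (A : Matrix ι ι 𝕜) (x : ι → 𝕜) : ℝ := RCLike.re (star x ⬝ᵥ A *ᵥ x)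

theorem quadForm_smul (A : Matrix ι ι 𝕜) (c : 𝕜) (x : ι → 𝕜) :
    quadForm A (c • x) = ‖c‖ ^ 2 * quadForm A x := by
  simp only [quadForm, star_smul, mulVec_smul, smul_dotProduct, dotProduct_smul, smul_eq_mul,
    ← mul_assoc, RCLike.star_def]
  rw [RCLike.mul_conj, ← RCLike.ofReal_pow, RCLike.re_ofReal_mul]

theorem quadForm_zero_right (A : Matrix ι ι 𝕜) : quadForm A 0 = 0 := by
  simp [quadForm]

theorem continuous_quadForm (A : Matrix ι ι 𝕜) : Continuous (quadForm A) := by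
  unfold quadForm dotProduct mulVec dotProduct
  fun_prop

theorem IsHermitian.ofReal_quadForm {A : Matrix ι ι 𝕜} (hA : A.IsHermitian) (x : ι → 𝕜) :
    (quadForm A x : 𝕜) = star x ⬝ᵥ A *ᵥ x :=
  RCLike.ext (by simp [quadForm]) (by simp [hA.im_star_dotProduct_mulVec_self])

theorem IsHermitian.posSemidef_iff_quadForm_nonneg {A : Matrix ι ι 𝕜} (hA : A.IsHermitian) :
    A.PosSemidef ↔ ∀ x, 0 ≤ quadForm A x := by
  simp only [posSemidef_iff_dotProduct_mulVec, hA, true_and, ← hA.ofReal_quadForm,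
    RCLike.ofReal_nonneg]

theorem PosSemidef.quadForm_nonneg {A : Matrix ι ι 𝕜} (hA : A.PosSemidef) (x : ι → 𝕜) :
    0 ≤ quadForm A x :=
  hA.re_dotProduct_nonneg x

theorem PosDef.quadForm_pos {A : Matrix ι ι 𝕜} (hA : A.PosDef) {x : ι → 𝕜} (hx : x ≠ 0) :
    0 < quadForm A x :=
  hA.re_dotProduct_pos hx

theorem quadForm_smul_sub (A B : Matrix ι ι 𝕜) (r : ℝ) (x : ι → 𝕜) :
    quadForm ((r : 𝕜) • B - A) x = r * quadForm B x - quadForm A x := by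
  simp [quadForm, sub_mulVec, smul_mulVec, RCLike.smul_re]

theorem exists_unit_forall_quadForm_le [Nonempty ι] (A : Matrix ι ι 𝕜) {B : Matrix ι ι 𝕜}
    (hB : B.PosDef) :
    ∃ v : ι → 𝕜, star v ⬝ᵥ v = 1 ∧
      ∀ x, quadForm A x ≤ quadForm A v / quadForm B v * quadForm B x := by
  set S := Metric.sphere (0 : EuclideanSpace 𝕜 ι) 1
  have hS0 : ∀ y ∈ S, y.ofLp ≠ 0 := fun y hy h ↦ by
    simp [S, show y = 0 from congrArg (WithLp.toLp 2) h] at hy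
  have hcont :
      ContinuousOn (fun y : EuclideanSpace 𝕜 ι ↦ quadForm A y.ofLp / quadForm B y.ofLp) S :=
    ((continuous_quadForm A).comp (PiLp.continuous_ofLp 2 _)).continuousOn.div
      ((continuous_quadForm B).comp (PiLp.continuous_ofLp 2 _)).continuousOn
      fun y hy ↦ (hB.quadForm_pos (hS0 y hy)).ne'
  obtain ⟨v, hvS, hmax⟩ := (isCompact_sphere 0 1).exists_isMaxOn
    (NormedSpace.sphere_nonempty.2 zero_le_one) hcont
  refine ⟨v.ofLp, ?_, fun x ↦ ?_⟩
  · have := inner_self_eq_norm_sq_to_K (𝕜 := 𝕜) v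
    rw [EuclideanSpace.inner_eq_star_dotProduct, mem_sphere_zero_iff_norm.1 hvS] at this
    simpa [dotProduct_comm] using this
  -- Both sides are homogeneous of degree 2 in `x`: it suffices to test the unit vector along `x`.
  rcases eq_or_ne x 0 with rfl | hx
  · simp [quadForm_zero_right]
  have hxn : ‖WithLp.toLp 2 x‖ ≠ 0 := by simpa using hx
  set c : 𝕜 := ((‖WithLp.toLp 2 x‖⁻¹ : ℝ) : 𝕜)
  have hc : 0 < ‖c‖ := by simp [c, hx]
  have hu : WithLp.toLp 2 (c • x) ∈ S := by
    simp [S, WithLp.toLp_smul, norm_smul, c, hxn]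
  have := isMaxOn_iff.1 hmax _ hu
  simp only [quadForm_smul] at this
  rwa [mul_div_mul_left _ _ (by positivity), div_le_iff₀ (hB.quadForm_pos hx)] at this

theorem setOf_posSemidef_smul_sub_eq_Ici {A B : Matrix ι ι 𝕜} (hA : A.IsHermitian)
    (hB : B.PosSemidef) {v : ι → 𝕜} {M : ℝ} (hAv : quadForm A v = M * quadForm B v)
    (hBv : 0 < quadForm B v) (hle : ∀ x, quadForm A x ≤ M * quadForm B x) :
    {lam : ℝ | ((lam : 𝕜) • B - A).PosSemidef} = Set.Ici M := by
  have hlam (lam : ℝ) : ((lam : 𝕜) • B - A).IsHermitian :=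
    (hB.isHermitian.smul (RCLike.conj_ofReal lam)).sub hA
  ext lam
  simp only [Set.mem_ofPred_eq, Set.mem_Ici, (hlam lam).posSemidef_iff_quadForm_nonneg,
    quadForm_smul_sub, sub_nonneg]
  refine ⟨fun h ↦ ?_, fun h x ↦ ?_⟩
  · exact le_of_mul_le_mul_right (hAv ▸ h v) hBv
  · exact (hle x).trans (mul_le_mul_of_nonneg_right h (hB.quadForm_nonneg x))

theorem one_le_of_posSemidef_smul_sub {ρ σ : Matrix ι ι 𝕜} {M : ℝ} (hρtr : ρ.trace = 1)
    (hσtr : σ.trace = 1) (h : ((M : 𝕜) • σ - ρ).PosSemidef) : 1 ≤ M := by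
  have := h.trace_nonneg
  rw [trace_sub, trace_smul, hρtr, hσtr, smul_eq_mul, mul_one, sub_nonneg] at this
  exact_mod_cast this

theorem trace_mul_div_le_of_posSemidef_smul_sub [DecidableEq ι] {ρ σ E : Matrix ι ι ℂ} {α M : ℝ}
    (hα : 0 < α) (hσ : σ.PosSemidef) (hσtr : σ.trace = 1)
    (hM : ((M : ℂ) • σ - ρ).PosSemidef) (hE : (E - ((α⁻¹ : ℝ) : ℂ) • 1).PosSemidef) :
    (E * ρ).trace.re / (E * σ).trace.re ≤ M := by
  have hEpsd : E.PosSemidef := by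
    simpa using hE.add (PosSemidef.one.smul (Complex.zero_le_real.2 (inv_pos.2 hα).le))
  have hden : α⁻¹ ≤ (E * σ).trace.re := by
    have := hE.trace_mul_nonneg hσ
    rw [sub_mul, smul_mul, one_mul, trace_sub, trace_smul, hσtr, sub_nonneg] at this
    simpa using (Complex.le_def.1 this).1
  have hnum : (E * ρ).trace.re ≤ M * (E * σ).trace.re := by
    have := hEpsd.trace_mul_nonneg hM
    rw [mul_sub, Matrix.mul_smul, trace_sub, trace_smul, sub_nonneg] at this
    simpa using (Complex.le_def.1 this).1
  rwa [div_le_iff₀ ((inv_pos.2 hα).trans_le hden)]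

end Matrix

theorem supAlpha_mem_Icc {n : ℕ} {ρ σ : Matrix (Fin n) (Fin n) ℂ} {α M : ℝ} (hα : 1 ≤ α)
    (hρtr : ρ.trace = 1) (hσ : σ.PosSemidef) (hσtr : σ.trace = 1)
    (hM : ((M : ℂ) • σ - ρ).PosSemidef) {v : Fin n → ℂ} (hv : star v ⬝ᵥ v = 1) :
    supAlpha α ρ σ ∈ Set.Icc
      ((α⁻¹ + (1 - α⁻¹) * quadForm ρ v) / (α⁻¹ + (1 - α⁻¹) * quadForm σ v)) M := by
  have hα0 : 0 < α := zero_lt_one.trans_le hα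
  have hcoeff : (0 : ℂ) ≤ ((1 - α⁻¹ : ℝ) : ℂ) :=
    Complex.zero_le_real.2 (sub_nonneg.2 (inv_le_one_of_one_le₀ hα))
  set E := ((α⁻¹ : ℝ) : ℂ) • (1 : Matrix (Fin n) (Fin n) ℂ)
    + ((1 - α⁻¹ : ℝ) : ℂ) • vecMulVec v (star v)
  have hE₀ : (E - ((α⁻¹ : ℝ) : ℂ) • 1).PosSemidef := by
    simpa [E] using (posSemidef_vecMulVec_self_star v).smul hcoeff
  have hE₁ : (1 - E).PosSemidef := by
    have h1E : 1 - E = ((1 - α⁻¹ : ℝ) : ℂ) • (1 - vecMulVec v (star v)) := by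
      simp only [E, Complex.ofReal_sub, Complex.ofReal_one]
      module
    exact h1E ▸ (posSemidef_one_sub_vecMulVec_self_star hv).smul hcoeff
  have htr (A : Matrix (Fin n) (Fin n) ℂ) (hA : A.trace = 1) :
      (E * A).trace.re = α⁻¹ + (1 - α⁻¹) * quadForm A v := by
    simp [E, add_mul, trace_add, trace_smul, hA, trace_vecMulVec_mul, quadForm]
  unfold supAlpha
  refine ⟨le_csSup ⟨M, ?_⟩ ⟨E, hE₀, hE₁, by rw [htr ρ hρtr, htr σ hσtr]⟩,
    csSup_le ⟨_, E, hE₀, hE₁, rfl⟩ ?_⟩ <;>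
  · rintro x ⟨E, hE, -, rfl⟩
    exact trace_mul_div_le_of_posSemidef_smul_sub hα0 hσ hσtr hM hE

theorem HAlpha_mem_Icc {n : ℕ} {ρ σ : Matrix (Fin n) (Fin n) ℂ} {α g M : ℝ} (hα : 1 < α)
    (hg : 0 < g) (h : supAlpha α ρ σ ∈ Set.Icc g M) :
    HAlpha α ρ σ ∈ Set.Icc (α / (α - 1) * Real.logb 2 g) (α / (α - 1) * Real.logb 2 M) := by
  have hw : 0 ≤ α / (α - 1) := (div_pos (by linarith) (by linarith)).le
  exact ⟨mul_le_mul_of_nonneg_left (Real.logb_le_logb_of_le one_lt_two hg h.1) hw,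
    mul_le_mul_of_nonneg_left (Real.logb_le_logb_of_le one_lt_two (hg.trans_le h.1) h.2) hw⟩

theorem tendsto_div_sub_one_atTop : Tendsto (fun α : ℝ ↦ α / (α - 1)) atTop (𝓝 1) := by
  have : Tendsto (fun α : ℝ ↦ (1 - α⁻¹)⁻¹) atTop (𝓝 1) := by
    simpa using (tendsto_inv_atTop_zero.const_sub (1 : ℝ)).inv₀ (by norm_num)
  refine this.congr' ?_
  filter_upwards [eventually_gt_atTop 1] with α hα
  have : α - 1 ≠ 0 := by linarith
  field_simp

theorem Filter.Tendsto.div_sub_one_mul {f : ℝ → ℝ} {L : ℝ} (hf : Tendsto f atTop (𝓝 L)) :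
    Tendsto (fun α ↦ α / (α - 1) * f α) atTop (𝓝 L) := by
  simpa using tendsto_div_sub_one_atTop.mul hf

theorem tendsto_inv_add_one_sub_inv_mul_div {a b : ℝ} (hb : b ≠ 0) :
    Tendsto (fun α : ℝ ↦ (α⁻¹ + (1 - α⁻¹) * a) / (α⁻¹ + (1 - α⁻¹) * b)) atTop (𝓝 (a / b)) := by
  have hφ : ContinuousAt (fun t : ℝ ↦ (t + (1 - t) * a) / (t + (1 - t) * b)) 0 :=
    by fun_prop (disch := simpa using hb)
  simpa [Function.comp_def] using hφ.tendsto.comp tendsto_inv_atTop_zero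

/-- For density matrices `ρ, σ` on `ℂ^n` with `σ` positive definite,
`lim_{α→∞} H_α(ρ‖σ) = D_max(ρ‖σ)`. -/
theorem hilbert_alpha_divergence_tendsto_Dmax
    {n : ℕ} (ρ σ : Matrix (Fin n) (Fin n) ℂ)
    (hρ : ρ.PosSemidef) (hρtr : ρ.trace = 1)
    (hσ : σ.PosSemidef) (hσtr : σ.trace = 1) (hσpd : σ.PosDef) :
    Filter.Tendsto (fun α : ℝ => HAlpha α ρ σ) Filter.atTop (nhds (Dmax ρ σ)) := by
  have : NeZero n := ⟨by rintro rfl; simp at hρtr⟩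
  obtain ⟨v, hv, hle⟩ := exists_unit_forall_quadForm_le ρ hσpd
  set M := quadForm ρ v / quadForm σ v
  have hσv : 0 < quadForm σ v := hσpd.quadForm_pos fun h ↦ by simp [h] at hv
  have hset : {lam : ℝ | ((lam : ℂ) • σ - ρ).PosSemidef} = Set.Ici M :=
    setOf_posSemidef_smul_sub_eq_Ici hρ.isHermitian hσ (div_mul_cancel₀ _ hσv.ne').symm hσv hle
  have hM : ((M : ℂ) • σ - ρ).PosSemidef := (Set.ext_iff.1 hset M).2 Set.self_mem_Ici
  have hM0 : 0 < M := one_pos.trans_le (one_le_of_posSemidef_smul_sub hρtr hσtr hM)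
  have hlower := tendsto_inv_add_one_sub_inv_mul_div (a := quadForm ρ v) hσv.ne'
  have hbounds := ((eventually_gt_atTop 1).and (hlower.eventually (eventually_gt_nhds hM0))).mono
    fun α h ↦ HAlpha_mem_Icc h.1 h.2 (supAlpha_mem_Icc h.1.le hρtr hσ hσtr hM hv)
  rw [Dmax, hset, csInf_Ici]
  exact tendsto_of_tendsto_of_tendsto_of_le_of_le' (hlower.logb hM0.ne').div_sub_one_mul
    tendsto_const_nhds.div_sub_one_mul (hbounds.mono fun _ h ↦ h.1) (hbounds.mono fun _ h ↦ h.2)
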